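/- arXiv:1007.3481 — 3 statements merged into one kernel-verified Lean document; each statement's English description precedes it below -/
import Mathlib

section
/- Let L_+, L_- : ℝ^m → ℝ be smooth, homogeneous of degree 2 (L_±(t x) = t² L_±(x) for t > 0), and let L := L_+ L_- / (L_+ − L_-) on the set where L_+ ≠ L_-. Suppose x satisfies L_+(x) ≠ L_-(x). Then x is a critical point of L if and only if x is a critical point of L_+ or a critical point of L_-. -/
/-- Euler's identity for degree-2 positively homogeneous functions. -/
lemma euler2 {m : ℕ} (f : (Fin m → ℝ) → ℝ) (hf : ContDiff ℝ (⊤ : ℕ∞) f)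
    (hh : ∀ (t : ℝ), 0 < t → ∀ x : Fin m → ℝ, f (t • x) = t ^ 2 * f x)
    (x : Fin m → ℝ) : fderiv ℝ f x x = 2 * f x := by
  have hdx : HasDerivAt (fun t : ℝ => t • x) ((1 : ℝ) • x) 1 :=
    (hasDerivAt_id (1 : ℝ)).smul_const x
  have h1 : HasDerivAt (fun t : ℝ => f (t • x)) (fderiv ℝ f x x) 1 := by
    have hfd : HasFDerivAt f (fderiv ℝ f x) ((1 : ℝ) • x) := by
      simpa using ((hf.differentiable (by simp)) x).hasFDerivAt
    have := hfd.comp_hasDerivAt 1 hdx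
    rw [one_smul] at this
    exact this
  have h2 : HasDerivAt (fun t : ℝ => t ^ 2 * f x) (2 * f x) 1 := by
    have := (hasDerivAt_pow 2 (1 : ℝ)).mul_const (f x)
    simpa using this
  have heq : (fun t : ℝ => t ^ 2 * f x) =ᶠ[nhds 1] (fun t : ℝ => f (t • x)) := by
    filter_upwards [eventually_gt_nhds (show (0:ℝ) < 1 by norm_num)] with t ht
    exact (hh t ht x).symm
  have h2' : HasDerivAt (fun t : ℝ => f (t • x)) (2 * f x) 1 :=
    h2.congr_of_eventuallyEq heq.symm
  exact h1.unique h2'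

/-- Finite-dimensional version of Lemma B.1: for smooth degree-2 homogeneous `L₊, L₋`
and `L = L₊ L₋ / (L₊ − L₋)`, at points where `L₊ ≠ L₋`, criticality of `L`
is equivalent to criticality of `L₊` or of `L₋`. -/
theorem stmt4 {m : ℕ} (Lp Lm : (Fin m → ℝ) → ℝ)
    (hp : ContDiff ℝ (⊤ : ℕ∞) Lp) (hm : ContDiff ℝ (⊤ : ℕ∞) Lm)
    (hhp : ∀ (t : ℝ), 0 < t → ∀ x : Fin m → ℝ, Lp (t • x) = t ^ 2 * Lp x)
    (hhm : ∀ (t : ℝ), 0 < t → ∀ x : Fin m → ℝ, Lm (t • x) = t ^ 2 * Lm x)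
    (L : (Fin m → ℝ) → ℝ) (hL : ∀ y, L y = Lp y * Lm y / (Lp y - Lm y))
    (x : Fin m → ℝ) (hne : Lp x ≠ Lm x) :
    fderiv ℝ L x = 0 ↔ (fderiv ℝ Lp x = 0 ∨ fderiv ℝ Lm x = 0) := by
  set a := Lp x with ha_def
  set b := Lm x with hb_def
  set P := fderiv ℝ Lp x with hP_def
  set M := fderiv ℝ Lm x with hM_def
  have hd : a - b ≠ 0 := sub_ne_zero.mpr hne
  have hP : HasFDerivAt Lp P x := ((hp.differentiable (by simp)) x).hasFDerivAt
  have hM : HasFDerivAt Lm M x := ((hm.differentiable (by simp)) x).hasFDerivAt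
  have eP : P x = 2 * a := euler2 Lp hp hhp x
  have eM : M x = 2 * b := euler2 Lm hm hhm x
  -- derivative of the inverse of the denominator
  have hsub : HasFDerivAt (fun y => Lp y - Lm y) (P - M) x := hP.sub hM
  have hinv : HasFDerivAt (fun y => (Lp y - Lm y)⁻¹)
      (((1 : ℝ →L[ℝ] ℝ).smulRight (-((a - b) ^ 2)⁻¹)).comp (P - M)) x := by
    have h := (hasFDerivAt_inv (x := a - b) hd).comp x hsub
    exact h
  have hmul : HasFDerivAt (fun y => Lp y * Lm y) (a • M + b • P) x := hP.mul hM
  have hLf : HasFDerivAt L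
      ((a * b) • (((1 : ℝ →L[ℝ] ℝ).smulRight (-((a - b) ^ 2)⁻¹)).comp (P - M))
        + (a - b)⁻¹ • (a • M + b • P)) x := by
    have h := hmul.mul hinv
    have hLeq : L = fun y => Lp y * Lm y * (Lp y - Lm y)⁻¹ := by
      funext y; rw [hL y, div_eq_mul_inv]
    rw [hLeq]
    exact h
  have hsimp : fderiv ℝ L x = (((a - b) ^ 2)⁻¹) • (a ^ 2 • M - b ^ 2 • P) := by
    rw [hLf.fderiv]
    ext v
    simp only [ContinuousLinearMap.add_apply, ContinuousLinearMap.smul_apply,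
      ContinuousLinearMap.comp_apply, ContinuousLinearMap.sub_apply,
      ContinuousLinearMap.smulRight_apply, ContinuousLinearMap.one_apply,
      smul_eq_mul]
    field_simp
    ring
  constructor
  · intro h
    rw [hsimp] at h
    have hc : (((a - b) ^ 2)⁻¹ : ℝ) ≠ 0 := inv_ne_zero (pow_ne_zero 2 hd)
    have h0 : a ^ 2 • M - b ^ 2 • P = 0 := (smul_eq_zero.mp h).resolve_left hc
    have hx0 : a ^ 2 * (2 * b) - b ^ 2 * (2 * a) = 0 := by
      have := congrArg (fun (f : (Fin m → ℝ) →L[ℝ] ℝ) => f x) h0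
      simpa [eP, eM, smul_eq_mul] using this
    have hab : a * b = 0 := by
      have h2 : 2 * (a * b) * (a - b) = 0 := by ring_nf; ring_nf at hx0; linarith
      rcases mul_eq_zero.mp h2 with h3 | h3
      · rcases mul_eq_zero.mp h3 with h4 | h4
        · norm_num at h4
        · exact h4
      · exact absurd h3 hd
    rcases mul_eq_zero.mp hab with h4 | h4
    · left
      have hb : b ≠ 0 := fun hb => hne (by rw [h4, hb])
      have : b ^ 2 • P = 0 := by
        have := h0
        rw [h4] at this
        simpa using this
      exact (smul_eq_zero.mp this).resolve_left (pow_ne_zero 2 hb)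
    · right
      have ha : a ≠ 0 := fun ha => hne (by rw [ha, h4])
      have : a ^ 2 • M = 0 := by
        have := h0
        rw [h4] at this
        simpa using this
      exact (smul_eq_zero.mp this).resolve_left (pow_ne_zero 2 ha)
  · intro h
    rcases h with h | h
    · have ha : a = 0 := by
        have := eP
        rw [h] at this
        simp at this
        linarith
      rw [hsimp, h, ha]
      simp
    · have hb : b = 0 := by
        have := eM
        rw [h] at this
        simp at this
        linarith
      rw [hsimp, h, hb]
      simp
end

section
/- A smooth nonvanishing function u : ℝ → ℂ solves the nonlinear second-order ODE ((ūu' − uū')/(2|u|²) · u)' + ((ūu')² − (uū')²)/(4|u|⁴) · u + u = 0 if and only if u solves i u' + u = 0 or i u' − u = 0. -/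
open Complex

private lemma pm_of_sq_eq_one {x : ℝ} (h : x ^ 2 = 1) : x = 1 ∨ x = -1 := by
  have h' : (x - 1) * (x + 1) = 0 := by nlinarith
  rcases mul_eq_zero.mp h' with h'' | h''
  · left; linarith
  · right; linarith

private lemma conj_hasDerivAt' {f : ℝ → ℂ} {f' : ℂ} {t : ℝ} (h : HasDerivAt f f' t) :
    HasDerivAt (fun s => (starRingEnd ℂ) (f s)) ((starRingEnd ℂ) f') t := by
  simpa [Function.comp_def] using ((Complex.conjCLE : ℂ →L[ℝ] ℂ).hasFDerivAt.comp_hasDerivAt t h)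

private lemma im_hasDerivAt' {f : ℝ → ℂ} {f' : ℂ} {t : ℝ} (h : HasDerivAt f f' t) :
    HasDerivAt (fun s => (f s).im) (f'.im) t := by
  simpa [Function.comp_def] using (Complex.imCLM.hasFDerivAt.comp_hasDerivAt t h)

private lemma keyA (z w : ℂ) (hz : z ≠ 0) :
    (starRingEnd ℂ z * w - z * starRingEnd ℂ w) / (2 * (‖z‖:ℂ)^2) * z
      = (w/z - starRingEnd ℂ (w/z))/2 * z := by
  have h : (‖z‖:ℂ)^2 = z * starRingEnd ℂ z := by simpa using (RCLike.mul_conj z).symm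
  have hz' : (starRingEnd ℂ) z ≠ 0 := by simpa using hz
  rw [h, map_div₀]; field_simp

private lemma keyB (z w : ℂ) (hz : z ≠ 0) :
    ((starRingEnd ℂ z * w)^2 - (z * starRingEnd ℂ w)^2) / (4 * (‖z‖:ℂ)^4)
      = ((w/z)^2 - (starRingEnd ℂ (w/z))^2)/4 := by
  have h : (‖z‖:ℂ)^4 = (z * starRingEnd ℂ z)^2 := by
    have : (‖z‖:ℂ)^2 = z * starRingEnd ℂ z := by simpa using (RCLike.mul_conj z).symm
    rw [← this]; ring
  have hz' : (starRingEnd ℂ) z ≠ 0 := by simpa using hz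
  rw [h, map_div₀]; field_simp

/-- Converse direction helper: if `u' = ε u` with `ε² = -1`, `conj ε = -ε`,
then the nonlinear ODE holds. -/
private lemma aux_conv (u : ℝ → ℂ) (hdu : Differentiable ℝ u) (hnz : ∀ t, u t ≠ 0)
    (ε : ℂ) (hε2 : ε * ε = -1) (hεc : (starRingEnd ℂ) ε = -ε)
    (h : ∀ t, deriv u t = ε * u t) (t : ℝ) :
    deriv (fun s : ℝ =>
        (starRingEnd ℂ (u s) * deriv u s - u s * starRingEnd ℂ (deriv u s)) /
          (2 * (‖u s‖ : ℂ) ^ 2) * u s) t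
      + (((starRingEnd ℂ (u t) * deriv u t) ^ 2
            - (u t * starRingEnd ℂ (deriv u t)) ^ 2) /
          (4 * (‖u t‖ : ℂ) ^ 4)) * u t
      + u t = 0 := by
  have hfun : (fun s : ℝ =>
      (starRingEnd ℂ (u s) * deriv u s - u s * starRingEnd ℂ (deriv u s)) /
        (2 * (‖u s‖ : ℂ) ^ 2) * u s) = fun s => ε * u s := by
    funext s
    have hz := hnz s
    have hz' : (starRingEnd ℂ) (u s) ≠ 0 := by simpa using hz
    have hn : (‖u s‖:ℂ)^2 = u s * starRingEnd ℂ (u s) := by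
      simpa using (RCLike.mul_conj (u s)).symm
    rw [h s, hn, map_mul, hεc]
    field_simp
    ring
  have hD : deriv (fun s => ε * u s) t = ε * deriv u t := by
    simpa using (deriv_const_mul ε (hdu t).differentiableAt)
  rw [hfun, hD, h t]
  have hQ : ((starRingEnd ℂ) (u t) * (ε * u t)) ^ 2
      - (u t * (starRingEnd ℂ) (ε * u t)) ^ 2 = 0 := by
    rw [map_mul, hεc]; ring
  rw [hQ, zero_div, zero_mul, ← mul_assoc, hε2]
  ring

open Complex in
/-- The nonlinear second-order ODE from Appendix B is equivalent, for smooth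
nonvanishing `u`, to one of the two linear first-order equations `i u' ± u = 0`. -/
theorem stmt5 (u : ℝ → ℂ) (hu : ContDiff ℝ (⊤ : ℕ∞) u) (hnz : ∀ t, u t ≠ 0) :
    (∀ t : ℝ,
      deriv (fun s : ℝ =>
          (starRingEnd ℂ (u s) * deriv u s - u s * starRingEnd ℂ (deriv u s)) /
            (2 * (‖u s‖ : ℂ) ^ 2) * u s) t
        + (((starRingEnd ℂ (u t) * deriv u t) ^ 2
              - (u t * starRingEnd ℂ (deriv u t)) ^ 2) /
            (4 * (‖u t‖ : ℂ) ^ 4)) * u t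
        + u t = 0)
    ↔ ((∀ t : ℝ, I * deriv u t + u t = 0) ∨ (∀ t : ℝ, I * deriv u t - u t = 0)) := by
  have hu' : ContDiff ℝ ((⊤:ℕ∞) : WithTop ℕ∞) u := hu.of_le (by simp)
  have hdu : Differentiable ℝ u := hu.differentiable (by simp)
  have h1t : (1 : WithTop ℕ∞) ≤ ((⊤:ℕ∞) : WithTop ℕ∞) := by exact_mod_cast le_top
  have hcd : ContDiff ℝ ((⊤:ℕ∞) : WithTop ℕ∞) (deriv u) := (contDiff_infty_iff_deriv.mp hu').2
  constructor
  · intro h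
    set g : ℝ → ℂ := fun t => deriv u t / u t with hg_def
    have hgd : Differentiable ℝ g := (hcd.differentiable (by simp)).div hdu hnz
    have hgc : Continuous g := hgd.continuous
    -- the reduced complex equation
    have key : ∀ t, 2 * (deriv g t - starRingEnd ℂ (deriv g t))
        + 2 * (g t - starRingEnd ℂ (g t)) * g t
        + ((g t)^2 - (starRingEnd ℂ (g t))^2) + 4 = 0 := by
      intro t
      have hU : HasDerivAt u (deriv u t) t := (hdu t).hasDerivAt
      have hG : HasDerivAt g (deriv g t) t := (hgd t).hasDerivAt
      have hP : HasDerivAt (fun s => (g s - starRingEnd ℂ (g s))/2)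
          ((deriv g t - starRingEnd ℂ (deriv g t))/2) t :=
        (hG.sub (conj_hasDerivAt' hG)).div_const 2
      have hPU : HasDerivAt (fun s => (g s - starRingEnd ℂ (g s))/2 * u s)
          ((deriv g t - starRingEnd ℂ (deriv g t))/2 * u t
            + (g t - starRingEnd ℂ (g t))/2 * deriv u t) t := hP.mul hU
      have e1 : deriv (fun s : ℝ =>
          (starRingEnd ℂ (u s) * deriv u s - u s * starRingEnd ℂ (deriv u s)) /
            (2 * (‖u s‖ : ℂ) ^ 2) * u s) t
          = (deriv g t - starRingEnd ℂ (deriv g t))/2 * u t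
            + (g t - starRingEnd ℂ (g t))/2 * deriv u t := by
        rw [show (fun s : ℝ =>
            (starRingEnd ℂ (u s) * deriv u s - u s * starRingEnd ℂ (deriv u s)) /
              (2 * (‖u s‖ : ℂ) ^ 2) * u s)
            = fun s => (g s - starRingEnd ℂ (g s))/2 * u s from
          funext fun s => keyA (u s) (deriv u s) (hnz s)]
        exact hPU.deriv
      have ht := h t
      rw [e1, keyB (u t) (deriv u t) (hnz t)] at ht
      have hg1 : deriv u t / u t = g t := rfl
      rw [hg1] at ht
      have hdu' : g t * u t = deriv u t := div_mul_cancel₀ _ (hnz t)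
      have hfac : ((deriv g t - starRingEnd ℂ (deriv g t))/2
          + (g t - starRingEnd ℂ (g t))/2 * g t
          + ((g t)^2 - (starRingEnd ℂ (g t))^2)/4 + 1) * u t = 0 := by
        linear_combination ht + ((g t - starRingEnd ℂ (g t))/2) * hdu'
      have h0 : (deriv g t - starRingEnd ℂ (deriv g t))/2
          + (g t - starRingEnd ℂ (g t))/2 * g t
          + ((g t)^2 - (starRingEnd ℂ (g t))^2)/4 + 1 = 0 :=
        (mul_eq_zero.mp hfac).resolve_right (hnz t)
      linear_combination 4 * h0
    -- real part: (Im g)^2 = 1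
    have hb2 : ∀ t, (g t).im ^ 2 = 1 := by
      intro t
      have := congrArg Complex.re (key t)
      simp [Complex.add_re, Complex.mul_re, Complex.sub_re, Complex.sub_im,
        Complex.mul_im, pow_two, Complex.conj_re, Complex.conj_im] at this
      nlinarith [this]
    -- imaginary part relation: Im (g') + 2 Re g * Im g = 0
    have him : ∀ t, (deriv g t).im + 2 * (g t).re * (g t).im = 0 := by
      intro t
      have := congrArg Complex.im (key t)
      simp [Complex.add_im, Complex.mul_re, Complex.sub_re, Complex.sub_im,
        Complex.mul_im, pow_two, Complex.conj_re, Complex.conj_im] at this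
      nlinarith [this]
    -- Im g is globally constant
    have hbc : Continuous fun t => (g t).im := Complex.continuous_im.comp hgc
    have hconst : ∀ t, (g t).im = (g 0).im := by
      intro t
      by_contra hne
      have hmem : (0:ℝ) ∈ Set.uIcc ((fun s => (g s).im) 0) ((fun s => (g s).im) t) := by
        simp only
        rcases pm_of_sq_eq_one (hb2 0) with h0 | h0 <;>
          rcases pm_of_sq_eq_one (hb2 t) with h1 | h1 <;>
          rw [h0, h1] at hne ⊢ <;>
          first
            | exact absurd rfl hne
            | (rw [Set.mem_uIcc]; norm_num)
      obtain ⟨c, _, hc⟩ := intermediate_value_uIcc hbc.continuousOn hmem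
      have hcontr := hb2 c
      rw [show (g c).im = 0 from hc] at hcontr
      norm_num at hcontr
    have hGim : ∀ t, (deriv g t).im = 0 := by
      intro t
      have hIm : HasDerivAt (fun s => (g s).im) ((deriv g t).im) t :=
        im_hasDerivAt' (hgd t).hasDerivAt
      have hfun : (fun s => (g s).im) = fun _ => (g 0).im := funext hconst
      rw [hfun] at hIm
      exact hIm.unique (hasDerivAt_const t _)
    have ha : ∀ t, (g t).re = 0 := by
      intro t
      have h2 := him t
      rw [hGim t] at h2
      have hb1 := hb2 t
      rcases pm_of_sq_eq_one hb1 with hb | hb <;> rw [hb] at h2 <;> linarith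
    have hdu2 : ∀ t, deriv u t = g t * u t :=
      fun t => (div_mul_cancel₀ _ (hnz t)).symm
    rcases pm_of_sq_eq_one (hb2 0) with hb0 | hb0
    · left
      intro t
      have hgt : g t = I := by
        apply Complex.ext
        · simp [ha t]
        · rw [hconst t, hb0]; simp
      rw [hdu2 t, hgt, ← mul_assoc, Complex.I_mul_I]
      ring
    · right
      intro t
      have hgt : g t = -I := by
        apply Complex.ext
        · simp [ha t]
        · rw [hconst t, hb0]; simp
      rw [hdu2 t, hgt, show I * (-I * u t) = -(I*I) * u t from by ring, Complex.I_mul_I]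
      ring
  · rintro (h | h)
    · have h' : ∀ t, deriv u t = I * u t := by
        intro t
        have h2 : I * (I * deriv u t + u t) = 0 := by rw [h t, mul_zero]
        rw [mul_add, ← mul_assoc, Complex.I_mul_I, neg_one_mul] at h2
        linear_combination -h2
      exact fun t => aux_conv u hdu hnz I Complex.I_mul_I (by simp) h' t
    · have h' : ∀ t, deriv u t = (-I) * u t := by
        intro t
        have h2 : I * (I * deriv u t - u t) = 0 := by rw [h t, mul_zero]
        rw [mul_sub, ← mul_assoc, Complex.I_mul_I, neg_one_mul] at h2
        linear_combination -h2
      exact fun t => aux_conv u hdu hnz (-I)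
        (by rw [neg_mul_neg, Complex.I_mul_I]) (by simp) h' t
end

section
/- The map ξ ↦ (ρ, θ⁰, θ¹, θ²) constructed from the paper's formulas is two-to-one: two spinors ξ, ξ' ∈ ℂ² satisfying |ξ¹|²−|ξ²|² > 0 yield the same density ρ and the same coframe (θ⁰, θ¹, θ²) if and only if ξ' = ξ or ξ' = −ξ. -/
/-!
The data are quadratic in `ξ`, so `ξ` and `-ξ` give the same data. Conversely, `ρ` and
`θ¹ + iθ²` recover `(ξ¹)² = ρ ((θ¹ + iθ²)₁ + i (θ¹ + iθ²)₂) / 2` and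
`ξ¹ξ² = ρ (θ¹ + iθ²)₀ / 2`; as `ρ > 0` forces `ξ¹ ≠ 0`, these two quantities determine
`(ξ¹, ξ²)` up to a common sign.
-/

open Complex

/-- The density `ρ = |ξ¹|² - |ξ²|²` of a spinor. -/
noncomputable def spinDensity (ξ1 ξ2 : ℂ) : ℝ := Complex.normSq ξ1 - Complex.normSq ξ2

/-- The covector `θ⁰_α = ρ⁻¹ ξ̄^ȧ σ_{αȧb} ξ^b`. -/
noncomputable def theta0 (ξ1 ξ2 : ℂ) : Fin 3 → ℝ :=
  ![(spinDensity ξ1 ξ2)⁻¹ * (Complex.normSq ξ1 + Complex.normSq ξ2),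
    (spinDensity ξ1 ξ2)⁻¹ * (2 * (starRingEnd ℂ ξ1 * ξ2).re),
    (spinDensity ξ1 ξ2)⁻¹ * (2 * (starRingEnd ℂ ξ1 * ξ2).im)]

/-- The complex covector `(θ¹ + iθ²)_α`. -/
noncomputable def theta12 (ξ1 ξ2 : ℂ) : Fin 3 → ℂ :=
  ![((spinDensity ξ1 ξ2 : ℝ) : ℂ)⁻¹ * (2 * ξ1 * ξ2),
    ((spinDensity ξ1 ξ2 : ℝ) : ℂ)⁻¹ * (ξ1 ^ 2 + ξ2 ^ 2),
    ((spinDensity ξ1 ξ2 : ℝ) : ℂ)⁻¹ * (I * (ξ2 ^ 2 - ξ1 ^ 2))]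

noncomputable def theta1 (ξ1 ξ2 : ℂ) : Fin 3 → ℝ := fun α => (theta12 ξ1 ξ2 α).re

noncomputable def theta2 (ξ1 ξ2 : ℂ) : Fin 3 → ℝ := fun α => (theta12 ξ1 ξ2 α).im

def ldot (P Q : Fin 3 → ℝ) : ℝ := -(P 0 * Q 0) + P 1 * Q 1 + P 2 * Q 2

theorem eq_and_eq_or_eq_neg_and_eq_neg_of_sq_eq_of_mul_eq {K : Type*} [CommRing K] [IsDomain K]
    {a b a' b' : K} (ha : a ≠ 0) (hsq : a' ^ 2 = a ^ 2) (hmul : a' * b' = a * b) :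
    (a' = a ∧ b' = b) ∨ (a' = -a ∧ b' = -b) := by
  rcases sq_eq_sq_iff_eq_or_eq_neg.mp hsq with rfl | rfl
  · exact Or.inl ⟨rfl, mul_left_cancel₀ ha hmul⟩
  · exact Or.inr ⟨rfl, neg_eq_iff_eq_neg.mp (mul_left_cancel₀ ha (by linear_combination hmul))⟩

section Spinor

variable (ξ1 ξ2 : ℂ)

theorem ne_zero_of_spinDensity_pos (h : 0 < spinDensity ξ1 ξ2) : ξ1 ≠ 0 := by
  rintro rfl
  have := Complex.normSq_nonneg ξ2
  simp only [spinDensity, map_zero] at h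
  linarith

theorem sq_eq_spinDensity_mul_theta12 (h : spinDensity ξ1 ξ2 ≠ 0) :
    ξ1 ^ 2 = spinDensity ξ1 ξ2 / 2 * (theta12 ξ1 ξ2 1 + I * theta12 ξ1 ξ2 2) := by
  have h' : ((spinDensity ξ1 ξ2 : ℝ) : ℂ) ≠ 0 := by exact_mod_cast h
  simp only [theta12, Matrix.cons_val_one, Matrix.cons_val_two, Matrix.cons_val_zero,
    Matrix.head_cons, Matrix.tail_cons]
  field_simp
  linear_combination (ξ1 ^ 2 - ξ2 ^ 2) * I_sq

theorem mul_eq_spinDensity_mul_theta12 (h : spinDensity ξ1 ξ2 ≠ 0) :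
    ξ1 * ξ2 = spinDensity ξ1 ξ2 / 2 * theta12 ξ1 ξ2 0 := by
  have h' : ((spinDensity ξ1 ξ2 : ℝ) : ℂ) ≠ 0 := by exact_mod_cast h
  simp only [theta12, Matrix.cons_val_zero]
  field_simp

theorem spinDensity_neg : spinDensity (-ξ1) (-ξ2) = spinDensity ξ1 ξ2 := by
  simp [spinDensity]

theorem theta0_neg : theta0 (-ξ1) (-ξ2) = theta0 ξ1 ξ2 := by
  funext α
  fin_cases α <;> simp [theta0, spinDensity_neg]

theorem theta12_neg : theta12 (-ξ1) (-ξ2) = theta12 ξ1 ξ2 := by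
  funext α
  fin_cases α <;> simp [theta12, spinDensity_neg]

theorem theta1_neg : theta1 (-ξ1) (-ξ2) = theta1 ξ1 ξ2 := by
  unfold theta1
  rw [theta12_neg]

theorem theta2_neg : theta2 (-ξ1) (-ξ2) = theta2 ξ1 ξ2 := by
  unfold theta2
  rw [theta12_neg]

end Spinor

theorem stmt11_general (ξ1 ξ2 ξ1' ξ2' : ℂ)
    (hρ : 0 < spinDensity ξ1 ξ2) :
    (spinDensity ξ1' ξ2' = spinDensity ξ1 ξ2 ∧
      theta0 ξ1' ξ2' = theta0 ξ1 ξ2 ∧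
      theta1 ξ1' ξ2' = theta1 ξ1 ξ2 ∧
      theta2 ξ1' ξ2' = theta2 ξ1 ξ2)
    ↔ ((ξ1' = ξ1 ∧ ξ2' = ξ2) ∨ (ξ1' = -ξ1 ∧ ξ2' = -ξ2)) := by
  constructor
  · rintro ⟨hρeq, -, h1, h2⟩
    have h12 : theta12 ξ1' ξ2' = theta12 ξ1 ξ2 :=
      funext fun α => Complex.ext (congrFun h1 α) (congrFun h2 α)
    have hne : spinDensity ξ1 ξ2 ≠ 0 := hρ.ne'
    have hne' : spinDensity ξ1' ξ2' ≠ 0 := hρeq ▸ hne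
    apply eq_and_eq_or_eq_neg_and_eq_neg_of_sq_eq_of_mul_eq (ne_zero_of_spinDensity_pos _ _ hρ)
    · rw [sq_eq_spinDensity_mul_theta12 _ _ hne', sq_eq_spinDensity_mul_theta12 _ _ hne, hρeq, h12]
    · rw [mul_eq_spinDensity_mul_theta12 _ _ hne', mul_eq_spinDensity_mul_theta12 _ _ hne, hρeq,
        h12]
  · rintro (⟨rfl, rfl⟩ | ⟨rfl, rfl⟩)
    · exact ⟨rfl, rfl, rfl, rfl⟩
    · exact ⟨spinDensity_neg _ _, theta0_neg _ _, theta1_neg _ _, theta2_neg _ _⟩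

/-- The map from spinors to (density, coframe) data is exactly two-to-one:
`ξ` and `ξ'` (both with positive density) produce the same data iff `ξ' = ±ξ`. -/
theorem stmt11 (ξ1 ξ2 ξ1' ξ2' : ℂ)
    (hρ : 0 < spinDensity ξ1 ξ2) (hρ' : 0 < spinDensity ξ1' ξ2') :
    (spinDensity ξ1' ξ2' = spinDensity ξ1 ξ2 ∧
      theta0 ξ1' ξ2' = theta0 ξ1 ξ2 ∧
      theta1 ξ1' ξ2' = theta1 ξ1 ξ2 ∧
      theta2 ξ1' ξ2' = theta2 ξ1 ξ2)
    ↔ ((ξ1' = ξ1 ∧ ξ2' = ξ2) ∨ (ξ1' = -ξ1 ∧ ξ2' = -ξ2)) :=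
  stmt11_general ξ1 ξ2 ξ1' ξ2' hρ
end
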